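/- Let S ⊆ H with |S| > 1 and h_0 ∈ S with π_S(h_0) > 1/2. In the greedy subtree T^g_S, let q_0, …, q_{D−1} with costs c_0, …, c_{D−1} be the questions asked along the root-to-h_0 path, let C_d = Σ_{i=0}^{d−1} c_i (with C_0 = 0), let R_0 = S \ {h_0}, and for d > 0 let R_d = R_{d−1} \ {h : q_{d−1}(h) ≠ q_{d−1}(h_0)}. Then for every 0 ≤ d < D, π(R_d) ≤ π(R_0) · exp( −C_d / (2 · C*(h_0)) ), where C*(h_0) is the cost of identifying h_0 in any query tree T* whose leaves contain S. -/

import Mathlib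

/-!
Write `B = π(S \ {h₀})` and `d_j = π{s ∈ S | q_j s ≠ q_j h₀}`. The questions on the path to `h₀`
in `T*` separate `h₀` from the rest of `S`, so `B ≤ ∑ d_j` over them (union bound), and averaging
against their costs gives one such question `j` with `B c_j ≤ C*(h₀) d_j`. Because `h₀` carries
more than half of `π(S)`, the shrinkage of any question lies between `d_j / π(S)` and
`2 d_j / π(S)`; hence the greedy question `i` satisfies `B c_i ≤ 2 C*(h₀) d_i`, i.e. it removes at
least a fraction `c_i / (2 C*(h₀))` of the remaining mass, and `1 - x ≤ exp (-x)`. The majority of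
`h₀` and the separation by the path in `T*` persist in the answer branch containing `h₀`, so the
bound iterates along the greedy path.
-/

open Finset

namespace ActiveLearning

variable {H A : Type*} {m : ℕ}

/-- The total mass of a weight function `v` on a finite set `S`. -/
def mass (v : H → ℝ) (S : Finset H) : ℝ := ∑ s ∈ S, v s

/-- `v` restricted to `S` and normalized. -/
noncomputable def restrict [DecidableEq H] (v : H → ℝ) (S : Finset H) : H → ℝ :=
  fun h => if h ∈ S then v h / mass v S else 0

/-- The shrinkage `Δ` of a question `qi` on `(S, v)`. -/
noncomputable def shrink [Fintype A] [DecidableEq A] (qi : H → A)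
    (S : Finset H) (v : H → ℝ) : ℝ :=
  mass v S - ∑ j : A, (mass v (S.filter fun s => qi s = j)) ^ 2 / mass v S

/-- The collision probability of a distribution `v`. -/
def CP [Fintype H] (v : H → ℝ) : ℝ := ∑ z : H, (v z) ^ 2

/-- Query trees: internal nodes are questions (indexed by `Fin m`), branches are answers,
leaves are hypotheses. -/
inductive QTree (m : ℕ) (H A : Type*) : Type _
  | leaf : H → QTree m H A
  | node : Fin m → (A → QTree m H A) → QTree m H A

/-- Follow the answers of hypothesis `h` down the tree, returning the leaf reached. -/
def follow (q : Fin m → H → A) : QTree m H A → H → H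
  | .leaf h', _ => h'
  | .node i ch, h => follow q (ch (q i h)) h

/-- The cost `c_T(h)`: sum of costs of the questions on the root-to-`h` path. -/
def pathCost (q : Fin m → H → A) (c : Fin m → ℝ) : QTree m H A → H → ℝ
  | .leaf _, _ => 0
  | .node i ch, h => c i + pathCost q c (ch (q i h)) h

/-- The leaves of `T` include `S`: every `h ∈ S` is identified by `T`. -/
def ValidOn (q : Fin m → H → A) (T : QTree m H A) (S : Finset H) : Prop :=
  ∀ h ∈ S, follow q T h = h

/-- The expected cost `C(T, v)` of a query tree `T` under weights `v`. -/
noncomputable def treeCost [Fintype H] (q : Fin m → H → A) (c : Fin m → ℝ)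
    (T : QTree m H A) (v : H → ℝ) : ℝ :=
  ∑ h : H, v h * pathCost q c T h

/-- The questions asked along the root-to-`h` path. -/
def pathQs (q : Fin m → H → A) : QTree m H A → H → List (Fin m)
  | .leaf _, _ => []
  | .node i ch, h => i :: pathQs q (ch (q i h)) h

/-- `T` is a greedy query tree for `π` on version space `S`: at every node it asks a question
maximizing the shrinkage-cost ratio and recurses on each nonempty answer class. -/
inductive IsGreedy [Fintype A] [DecidableEq A] [DecidableEq H]
    (q : Fin m → H → A) (c : Fin m → ℝ) (π : H → ℝ) :
    QTree m H A → Finset H → Prop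
  | leaf (h : H) : IsGreedy q c π (.leaf h) {h}
  | node (S : Finset H) (i : Fin m) (ch : A → QTree m H A)
      (hcard : 1 < S.card)
      (hmax : ∀ j : Fin m,
        shrink (q j) S (restrict π S) / c j ≤ shrink (q i) S (restrict π S) / c i)
      (hch : ∀ a : A, (S.filter fun s => q i s = a).Nonempty →
        IsGreedy q c π (ch a) (S.filter fun s => q i s = a)) :
      IsGreedy q c π (.node i ch) S

/-- `T` is an `ε`-approximate greedy query tree for `π` on version space `S`. -/
inductive IsApproxGreedy [Fintype A] [DecidableEq A] [DecidableEq H]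
    (ε : ℝ) (q : Fin m → H → A) (c : Fin m → ℝ) (π : H → ℝ) :
    QTree m H A → Finset H → Prop
  | leaf (h : H) : IsApproxGreedy ε q c π (.leaf h) {h}
  | node (S : Finset H) (i : Fin m) (ch : A → QTree m H A)
      (hcard : 1 < S.card)
      (happrox : ∀ j : Fin m,
        (1 - ε) * (shrink (q j) S (restrict π S) / c j) ≤
          shrink (q i) S (restrict π S) / c i)
      (hch : ∀ a : A, (S.filter fun s => q i s = a).Nonempty →
        IsApproxGreedy ε q c π (ch a) (S.filter fun s => q i s = a)) :
      IsApproxGreedy ε q c π (.node i ch) S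

/-- `T` is irreducible on version space `S`: every asked question strictly splits the
surviving set. -/
inductive Irreducible [DecidableEq A] (q : Fin m → H → A) :
    QTree m H A → Finset H → Prop
  | leaf (h : H) (S : Finset H) : Irreducible q (.leaf h) S
  | node (S : Finset H) (i : Fin m) (ch : A → QTree m H A)
      (hsplit : ∃ s ∈ S, ∃ t ∈ S, q i s ≠ q i t)
      (hch : ∀ a : A, (S.filter fun s => q i s = a).Nonempty →
        Irreducible q (ch a) (S.filter fun s => q i s = a)) :
      Irreducible q (.node i ch) S


section Mass

variable {π : H → ℝ}

theorem mass_nonneg (hπ : ∀ h, 0 ≤ π h) (S : Finset H) : 0 ≤ mass π S :=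
  sum_nonneg fun h _ => hπ h

theorem mass_mono (hπ : ∀ h, 0 ≤ π h) {S T : Finset H} (hST : S ⊆ T) :
    mass π S ≤ mass π T :=
  sum_le_sum_of_subset_of_nonneg hST fun h _ _ => hπ h

theorem mass_pos (hπ : ∀ h, 0 < π h) {S : Finset H} (hS : S.Nonempty) : 0 < mass π S :=
  sum_pos (fun h _ => hπ h) hS

theorem mass_filter_add_mass_filter_not (S : Finset H) (p : H → Prop) [DecidablePred p] :
    mass π (S.filter p) + mass π (S.filter fun s => ¬ p s) = mass π S :=
  sum_filter_add_sum_filter_not S p π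

theorem mass_restrict [DecidableEq H] {S T : Finset H} (hTS : T ⊆ S) :
    mass (restrict π S) T = mass π T / mass π S := by
  rw [mass, mass, sum_div]
  exact sum_congr rfl fun t ht => if_pos (hTS ht)

theorem mass_le_sum_mass_filter (hπ : ∀ h, 0 ≤ π h) {ι : Type*} (P : ι → H → Prop)
    [∀ j, DecidablePred (P j)] (L : List ι) {S T : Finset H} (hTS : T ⊆ S)
    (hcov : ∀ r ∈ T, ∃ j ∈ L, P j r) :
    mass π T ≤ (L.map fun j => mass π (S.filter (P j))).sum := by
  induction L generalizing T with
  | nil =>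
    have hT : T = ∅ := eq_empty_of_forall_notMem fun r hr => by simpa using hcov r hr
    simp [hT, mass]
  | cons j L ih =>
    rw [← mass_filter_add_mass_filter_not T (P j), List.map_cons, List.sum_cons]
    refine add_le_add (mass_mono hπ (filter_subset_filter _ hTS)) (ih ?_ ?_)
    · exact (filter_subset _ _).trans hTS
    · intro r hr
      rw [mem_filter] at hr
      obtain ⟨k, hk, hPk⟩ := hcov r hr.1
      rcases List.mem_cons.mp hk with rfl | hk
      · exact absurd hPk hr.2
      · exact ⟨k, hk, hPk⟩

end Mass

theorem _root_.List.exists_mem_mul_le_sum_mul {ι : Type*} {L : List ι} (hL : L ≠ [])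
    {c d : ι → ℝ} (hc : ∀ j ∈ L, 0 ≤ c j) {B : ℝ} (hB : B ≤ (L.map d).sum) :
    ∃ j ∈ L, B * c j ≤ (L.map c).sum * d j := by
  refine List.exists_le_of_sum_le hL _ _ ?_
  rw [List.sum_map_mul_left, List.sum_map_mul_left, mul_comm]
  exact mul_le_mul_of_nonneg_left hB (List.sum_nonneg (by simpa using hc))

section Shrink

variable [Fintype A] [DecidableEq A] {π : H → ℝ} {S : Finset H}

theorem shrink_restrict_eq [DecidableEq H] (hS : mass π S ≠ 0) (f : H → A) :
    shrink f S (restrict π S) =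
      1 - (∑ a : A, mass π (S.filter fun s => f s = a) ^ 2) / mass π S ^ 2 := by
  rw [shrink, mass_restrict subset_rfl, div_self hS, sum_div]
  congr 1
  refine sum_congr rfl fun a _ => ?_
  rw [mass_restrict (filter_subset _ _), div_one, div_pow]

theorem sum_sq_mass_filter_le (hπ : ∀ h, 0 ≤ π h) (f : H → A) (a₀ : A) :
    ∑ a : A, mass π (S.filter fun s => f s = a) ^ 2 ≤
      mass π (S.filter fun s => f s = a₀) ^ 2 + mass π (S.filter fun s => f s ≠ a₀) ^ 2 := by
  have hrest : ∑ a ∈ univ.erase a₀, mass π (S.filter fun s => f s = a) =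
      mass π (S.filter fun s => f s ≠ a₀) := by
    have hfib : ∑ a : A, mass π (S.filter fun s => f s = a) = mass π S :=
      sum_fiberwise S f π
    have := mass_filter_add_mass_filter_not (π := π) S (fun s => f s = a₀)
    rw [← sum_erase_add _ _ (mem_univ a₀)] at hfib
    linarith
  rw [← sum_erase_add _ _ (mem_univ a₀), add_comm, ← hrest]
  gcongr
  exact sum_sq_le_sq_sum_of_nonneg fun a _ => mass_nonneg hπ _

variable [DecidableEq H] {h₀ : H}

theorem shrink_restrict_le (hπ : ∀ h, 0 < π h) (h₀S : h₀ ∈ S) (f : H → A) :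
    shrink f S (restrict π S) ≤ 2 * mass π (S.filter fun s => f s ≠ f h₀) / mass π S := by
  set M := mass π S
  set a := mass π (S.filter fun s => f s = f h₀)
  set d := mass π (S.filter fun s => f s ≠ f h₀)
  have hM : 0 < M := mass_pos hπ ⟨h₀, h₀S⟩
  have had : a + d = M := mass_filter_add_mass_filter_not S _
  have hd : 0 ≤ d := mass_nonneg (fun h => (hπ h).le) _
  have ha : a ^ 2 ≤ ∑ b : A, mass π (S.filter fun s => f s = b) ^ 2 :=
    single_le_sum (f := fun b => mass π (S.filter fun s => f s = b) ^ 2)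
      (fun b _ => sq_nonneg _) (mem_univ (f h₀))
  rw [shrink_restrict_eq hM.ne']
  calc 1 - (∑ b : A, mass π (S.filter fun s => f s = b) ^ 2) / M ^ 2
      ≤ 1 - a ^ 2 / M ^ 2 := by gcongr
    _ = d * (M + a) / M ^ 2 := by field_simp; rw [← had]; ring
    _ ≤ d * (2 * M) / M ^ 2 := by gcongr; linarith
    _ = 2 * d / M := by field_simp

theorem div_mass_le_shrink_restrict (hπ : ∀ h, 0 < π h) (h₀S : h₀ ∈ S)
    (hmaj : mass π S ≤ 2 * π h₀) (f : H → A) :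
    mass π (S.filter fun s => f s ≠ f h₀) / mass π S ≤ shrink f S (restrict π S) := by
  set M := mass π S
  set a := mass π (S.filter fun s => f s = f h₀)
  set d := mass π (S.filter fun s => f s ≠ f h₀)
  have hM : 0 < M := mass_pos hπ ⟨h₀, h₀S⟩
  have had : a + d = M := mass_filter_add_mass_filter_not S _
  have hd : 0 ≤ d := mass_nonneg (fun h => (hπ h).le) _
  have ha : M ≤ 2 * a := hmaj.trans <| by
    gcongr
    exact single_le_sum (fun h _ => (hπ h).le) (mem_filter.mpr ⟨h₀S, rfl⟩)
  rw [shrink_restrict_eq hM.ne']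
  calc d / M = d * M / M ^ 2 := by field_simp
    _ ≤ d * (2 * a) / M ^ 2 := by gcongr
    _ = 1 - (a ^ 2 + d ^ 2) / M ^ 2 := by field_simp; rw [← had]; ring
    _ ≤ 1 - (∑ b : A, mass π (S.filter fun s => f s = b) ^ 2) / M ^ 2 := by
      gcongr
      exact sum_sq_mass_filter_le (fun h => (hπ h).le) f (f h₀)

end Shrink

def SeparatesFrom [DecidableEq A] (q : Fin m → H → A) (L : List (Fin m)) (h₀ : H)
    (S : Finset H) : Prop :=
  ∀ r ∈ S, r ≠ h₀ → ∃ i ∈ L, q i r ≠ q i h₀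

def IsGreedyChoice [Fintype A] [DecidableEq A] [DecidableEq H] (q : Fin m → H → A)
    (c : Fin m → ℝ) (π : H → ℝ) (S : Finset H) (i : Fin m) : Prop :=
  ∀ j, shrink (q j) S (restrict π S) / c j ≤ shrink (q i) S (restrict π S) / c i

/-- The set `R_d` of the paper when `L` lists the first `d` questions. -/
def survivors [DecidableEq A] [DecidableEq H] (q : Fin m → H → A) (L : List (Fin m))
    (S : Finset H) (h₀ : H) : Finset H :=
  (S.erase h₀).filter fun r => ∀ i ∈ L, q i r = q i h₀

section Separation

variable [DecidableEq A] {q : Fin m → H → A} {L : List (Fin m)} {h₀ : H} {S : Finset H}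

theorem SeparatesFrom.mono {T : Finset H} (hsep : SeparatesFrom q L h₀ S) (hTS : T ⊆ S) :
    SeparatesFrom q L h₀ T :=
  fun r hr => hsep r (hTS hr)

theorem SeparatesFrom.ne_nil (hsep : SeparatesFrom q L h₀ S) (hS : 1 < S.card) : L ≠ [] := by
  obtain ⟨r, hr, hne⟩ := exists_mem_ne hS h₀
  obtain ⟨i, hi, -⟩ := hsep r hr hne
  exact List.ne_nil_of_mem hi

theorem SeparatesFrom.mass_erase_le_sum [DecidableEq H] {π : H → ℝ} (hπ : ∀ h, 0 ≤ π h)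
    (hsep : SeparatesFrom q L h₀ S) :
    mass π (S.erase h₀) ≤ (L.map fun j => mass π (S.filter fun s => q j s ≠ q j h₀)).sum :=
  mass_le_sum_mass_filter hπ (fun j s => q j s ≠ q j h₀) L (erase_subset _ _)
    fun r hr => hsep r (mem_of_mem_erase hr) (ne_of_mem_erase hr)

theorem survivors_nil [DecidableEq H] : survivors q [] S h₀ = S.erase h₀ :=
  filter_true_of_mem fun _ _ _ h => absurd h List.not_mem_nil

theorem survivors_cons [DecidableEq H] (i : Fin m) :
    survivors q (i :: L) S h₀ = survivors q L (S.filter fun s => q i s = q i h₀) h₀ := by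
  ext r
  simp only [survivors, mem_filter, mem_erase, List.forall_mem_cons]
  tauto

theorem SeparatesFrom.exists_mass_erase_mul_le [DecidableEq H] {c : Fin m → ℝ} {π : H → ℝ}
    (hπ : ∀ h, 0 ≤ π h) (hc : ∀ j, 0 < c j)
    (hsep : SeparatesFrom q L h₀ S) (hS : 1 < S.card) :
    ∃ j ∈ L, mass π (S.erase h₀) * c j ≤
      (L.map c).sum * mass π (S.filter fun s => q j s ≠ q j h₀) :=
  List.exists_mem_mul_le_sum_mul (hsep.ne_nil hS) (fun j _ => (hc j).le)
    (hsep.mass_erase_le_sum hπ)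

end Separation

section Greedy

variable [Fintype A] [DecidableEq A] [DecidableEq H] {q : Fin m → H → A} {c : Fin m → ℝ}
  {π : H → ℝ} {L : List (Fin m)} {h₀ : H} {S : Finset H} {i : Fin m}

theorem IsGreedyChoice.mass_erase_mul_le (hπ : ∀ h, 0 < π h) (hc : ∀ j, 0 < c j)
    (hgreedy : IsGreedyChoice q c π S i) (hsep : SeparatesFrom q L h₀ S) (hS : 1 < S.card)
    (h₀S : h₀ ∈ S) (hmaj : mass π S ≤ 2 * π h₀) :
    mass π (S.erase h₀) * c i ≤
      2 * (L.map c).sum * mass π (S.filter fun s => q i s ≠ q i h₀) := by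
  obtain ⟨j, -, hj⟩ := hsep.exists_mass_erase_mul_le (fun h => (hπ h).le) hc hS
  set M := mass π S
  set dᵢ := mass π (S.filter fun s => q i s ≠ q i h₀)
  set dⱼ := mass π (S.filter fun s => q j s ≠ q j h₀)
  have hM : 0 < M := mass_pos hπ ⟨h₀, h₀S⟩
  have hCs : 0 ≤ (L.map c).sum := List.sum_nonneg (by simpa using fun j _ => (hc j).le)
  have hratio : dⱼ / M * c i ≤ 2 * dᵢ / M * c j :=
    calc dⱼ / M * c i ≤ shrink (q j) S (restrict π S) * c i :=
          mul_le_mul_of_nonneg_right (div_mass_le_shrink_restrict hπ h₀S hmaj (q j)) (hc i).le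
      _ ≤ shrink (q i) S (restrict π S) * c j := by
          have := hgreedy j
          rwa [div_le_div_iff₀ (hc j) (hc i)] at this
      _ ≤ 2 * dᵢ / M * c j :=
          mul_le_mul_of_nonneg_right (shrink_restrict_le hπ h₀S (q i)) (hc j).le
  rw [div_mul_eq_mul_div, div_mul_eq_mul_div, div_le_div_iff_of_pos_right hM] at hratio
  refine le_of_mul_le_mul_right ?_ (hc j)
  calc mass π (S.erase h₀) * c i * c j = mass π (S.erase h₀) * c j * c i := by ring
    _ ≤ (L.map c).sum * dⱼ * c i := mul_le_mul_of_nonneg_right hj (hc i).le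
    _ ≤ (L.map c).sum * (2 * dᵢ * c j) := by rw [mul_assoc]; gcongr
    _ = 2 * (L.map c).sum * dᵢ * c j := by ring

theorem IsGreedyChoice.mass_erase_filter_le (hπ : ∀ h, 0 < π h) (hc : ∀ j, 0 < c j)
    (hgreedy : IsGreedyChoice q c π S i) (hsep : SeparatesFrom q L h₀ S) (hS : 1 < S.card)
    (h₀S : h₀ ∈ S) (hmaj : mass π S ≤ 2 * π h₀) :
    mass π ((S.filter fun s => q i s = q i h₀).erase h₀) ≤
      mass π (S.erase h₀) * Real.exp (-c i / (2 * (L.map c).sum)) := by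
  have hCs : 0 < 2 * (L.map c).sum :=
    mul_pos two_pos <|
      List.sum_pos _ (by simpa using fun j _ => hc j) (by simpa using hsep.ne_nil hS)
  have hsplit : mass π ((S.filter fun s => q i s = q i h₀).erase h₀) +
      mass π (S.filter fun s => q i s ≠ q i h₀) = mass π (S.erase h₀) := by
    have hne : ((S.erase h₀).filter fun s => ¬ q i s = q i h₀) =
        S.filter fun s => q i s ≠ q i h₀ := by
      ext s
      simp only [mem_filter, mem_erase]
      exact ⟨fun h => ⟨h.1.2, h.2⟩, fun h => ⟨⟨fun hs => h.2 (hs ▸ rfl), h.1⟩, h.2⟩⟩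
    rw [← mass_filter_add_mass_filter_not (S.erase h₀) fun s => q i s = q i h₀, hne,
      filter_erase]
  have hkey : mass π (S.erase h₀) * c i / (2 * (L.map c).sum) ≤
      mass π (S.filter fun s => q i s ≠ q i h₀) := by
    rw [div_le_iff₀ hCs, mul_comm _ (2 * _)]
    exact hgreedy.mass_erase_mul_le hπ hc hsep hS h₀S hmaj
  calc mass π ((S.filter fun s => q i s = q i h₀).erase h₀)
      ≤ mass π (S.erase h₀) * (1 - c i / (2 * (L.map c).sum)) := by
        rw [mul_sub, mul_one, mul_div_assoc']; linarith
    _ ≤ mass π (S.erase h₀) * Real.exp (-c i / (2 * (L.map c).sum)) := by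
      gcongr
      · exact mass_nonneg (fun h => (hπ h).le) _
      · linarith [Real.add_one_le_exp (-c i / (2 * (L.map c).sum)),
          neg_div (2 * (L.map c).sum) (c i)]

end Greedy

section Tree

theorem pathCost_eq_sum_map_pathQs (q : Fin m → H → A) (c : Fin m → ℝ) :
    ∀ (T : QTree m H A) (h : H), pathCost q c T h = ((pathQs q T h).map c).sum
  | .leaf _, _ => rfl
  | .node i ch, h => by
    rw [pathCost, pathQs, List.map_cons, List.sum_cons, pathCost_eq_sum_map_pathQs q c]

theorem exists_mem_pathQs_ne_of_follow_ne (q : Fin m → H → A) {r h₀ : H} :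
    ∀ T : QTree m H A, follow q T r ≠ follow q T h₀ → ∃ i ∈ pathQs q T h₀, q i r ≠ q i h₀
  | .leaf _, h => absurd rfl h
  | .node i ch, h => by
    by_cases hi : q i r = q i h₀
    · obtain ⟨j, hj, hne⟩ :=
        exists_mem_pathQs_ne_of_follow_ne q (ch (q i h₀)) (by simpa [follow, hi] using h)
      exact ⟨j, List.mem_cons_of_mem _ hj, hne⟩
    · exact ⟨i, List.mem_cons_self, hi⟩

theorem ValidOn.separatesFrom_pathQs [DecidableEq A] {q : Fin m → H → A} {T : QTree m H A}
    {S : Finset H} {h₀ : H} (hT : ValidOn q T S) (h₀S : h₀ ∈ S) :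
    SeparatesFrom q (pathQs q T h₀) h₀ S := fun r hr hne =>
  exists_mem_pathQs_ne_of_follow_ne q T (by rwa [hT r hr, hT h₀ h₀S])

theorem IsGreedy.mass_survivors_le [Fintype A] [DecidableEq A] [DecidableEq H]
    {q : Fin m → H → A} {c : Fin m → ℝ} {π : H → ℝ} {T : QTree m H A} {S : Finset H}
    {L : List (Fin m)} {h₀ : H} (hπ : ∀ h, 0 < π h) (hc : ∀ j, 0 < c j)
    (hT : IsGreedy q c π T S) (h₀S : h₀ ∈ S) (hmaj : mass π S ≤ 2 * π h₀)
    (hsep : SeparatesFrom q L h₀ S) (d : ℕ) :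
    mass π (survivors q ((pathQs q T h₀).take d) S h₀) ≤
      mass π (S.erase h₀) *
        Real.exp (-(((pathQs q T h₀).take d).map c).sum / (2 * (L.map c).sum)) := by
  induction hT generalizing d with
  | leaf _ => simp [pathQs, survivors_nil]
  | node S i ch hS hgreedy _ ih =>
    cases d with
    | zero => simp [survivors_nil]
    | succ d =>
      have h₀V : h₀ ∈ S.filter fun s => q i s = q i h₀ := mem_filter.mpr ⟨h₀S, rfl⟩
      have hIH := ih (q i h₀) ⟨h₀, h₀V⟩ h₀V
        ((mass_mono (fun h => (hπ h).le) (filter_subset _ _)).trans hmaj)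
        (hsep.mono (filter_subset _ _)) d
      have hstep := IsGreedyChoice.mass_erase_filter_le hπ hc hgreedy hsep hS h₀S hmaj
      rw [pathQs, List.take_succ_cons, survivors_cons, List.map_cons, List.sum_cons, neg_add,
        add_div, Real.exp_add, ← mul_assoc]
      exact hIH.trans (mul_le_mul_of_nonneg_right hstep (Real.exp_pos _).le)

end Tree

theorem greedy_mass_decay_general [Fintype A] [DecidableEq H] [DecidableEq A]
    (π : H → ℝ) (hπpos : ∀ h, 0 < π h)
    (q : Fin m → H → A) (c : Fin m → ℝ) (hc : ∀ i, 0 < c i)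
    (S : Finset H)
    (h0 : H) (h0S : h0 ∈ S) (hh0 : 1 / 2 < restrict π S h0)
    (Tg : QTree m H A) (hTg : IsGreedy q c π Tg S)
    (Tstar : QTree m H A) (hTstar : ValidOn q Tstar S) :
    ∀ d : ℕ, d < (pathQs q Tg h0).length →
      mass π ((S.erase h0).filter fun r =>
          ∀ i ∈ (pathQs q Tg h0).take d, q i r = q i h0) ≤
        mass π (S.erase h0) *
          Real.exp (-(((pathQs q Tg h0).take d).map c).sum /
            (2 * pathCost q c Tstar h0)) := by
  intro d _
  have hmaj : mass π S ≤ 2 * π h0 := by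
    rw [restrict, if_pos h0S, lt_div_iff₀ (mass_pos hπpos ⟨h0, h0S⟩)] at hh0
    linarith
  rw [pathCost_eq_sum_map_pathQs]
  exact hTg.mass_survivors_le hπpos hc h0S hmaj (hTstar.separatesFrom_pathQs h0S) d

/-- Along the root-to-`h_0` path of the greedy subtree `T^g_S`
(questions `q_0, …, q_{D−1}`, prefix costs `C_d`, surviving sets
`R_d = R_0 ∩ {r : r agrees with h_0 on the first d questions}` where `R_0 = S \ {h_0}`),
for every `0 ≤ d < D`, `π(R_d) ≤ π(R_0) · exp( −C_d / (2 · C*(h_0)) )`. -/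
theorem greedy_mass_decay [Fintype H] [Fintype A] [DecidableEq H] [DecidableEq A]
    (π : H → ℝ) (hπpos : ∀ h, 0 < π h) (hπsum : ∑ h : H, π h = 1)
    (hH : 1 < Fintype.card H)
    (q : Fin m → H → A) (c : Fin m → ℝ) (hc : ∀ i, 0 < c i)
    (hdist : ∀ h h' : H, h ≠ h' → ∃ i : Fin m, q i h ≠ q i h')
    (S : Finset H) (hS : 1 < S.card)
    (h0 : H) (h0S : h0 ∈ S) (hh0 : 1 / 2 < restrict π S h0)
    (Tg : QTree m H A) (hTg : IsGreedy q c π Tg S)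
    (Tstar : QTree m H A) (hTstar : ValidOn q Tstar S) :
    ∀ d : ℕ, d < (pathQs q Tg h0).length →
      mass π ((S.erase h0).filter fun r =>
          ∀ i ∈ (pathQs q Tg h0).take d, q i r = q i h0) ≤
        mass π (S.erase h0) *
          Real.exp (-(((pathQs q Tg h0).take d).map c).sum /
            (2 * pathCost q c Tstar h0)) :=
  greedy_mass_decay_general π hπpos q c hc S h0 h0S hh0 Tg hTg Tstar hTstar

end ActiveLearning
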